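/- For every n ≥ 2, the disjoint union of n directed triangles, nC3, has a graceful difference labeling in which at most one arc has magnitude 3n-2 and every other arc has magnitude strictly smaller than 3n-2. -/
import Mathlib


/-- Cyclic successor on `Fin k`. -/
def cyc (k : ℕ) (hk : 0 < k) (i : Fin k) : Fin k := ⟨(i.val + 1) % k, Nat.mod_lt _ hk⟩

/-- `f` is a graceful difference labeling of the digraph with arc set `A`:
`f` is a bijection from the vertices onto `{1,…,|V|}` and the arc labels
`f v - f u` are pairwise distinct. -/
def IsGdlOn {V : Type} [Fintype V] (A : Set (V × V)) (f : V → ℤ) : Prop :=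
  Set.BijOn f Set.univ (Set.Icc 1 (Fintype.card V : ℤ)) ∧
  Set.InjOn (fun a : V × V => f a.2 - f a.1) A

/-- Arc set of the directed circuit on `Fin k`. -/
def circuitArcs (k : ℕ) (hk : 0 < k) : Set (Fin k × Fin k) :=
  Set.range (fun i => (i, cyc k hk i))

def Concl (n : ℕ) : Prop :=
  ∃ f : Fin n × Fin 3 → ℤ,
    IsGdlOn (Set.range (fun p : Fin n × Fin 3 => (p, (p.1, cyc 3 (by omega) p.2)))) f ∧
    (∀ p : Fin n × Fin 3, |f (p.1, cyc 3 (by omega) p.2) - f p| ≤ 3 * (n : ℤ) - 2) ∧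
    (∀ p q : Fin n × Fin 3,
      |f (p.1, cyc 3 (by omega) p.2) - f p| = 3 * (n : ℤ) - 2 →
      |f (q.1, cyc 3 (by omega) q.2) - f q| = 3 * (n : ℤ) - 2 → p = q)

lemma glue (n : ℕ) (hn : 2 ≤ n) (F : ℕ → ℕ → ℤ)
    (hmaps : ∀ j, j < n → ∀ i, i < 3 → 1 ≤ F j i ∧ F j i ≤ 3 * n)
    (hinj : ∀ j, j < n → ∀ i, i < 3 → ∀ k, k < n → ∀ l, l < 3 →
      F j i = F k l → j = k ∧ i = l)
    (hd : ∀ j, j < n → ∀ i, i < 3 → ∀ k, k < n → ∀ l, l < 3 →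
      F j ((i+1) % 3) - F j i = F k ((l+1) % 3) - F k l → j = k ∧ i = l)
    (hb : ∀ j, j < n → ∀ i, i < 3 →
      -(3*(n:ℤ) - 2) ≤ F j ((i+1) % 3) - F j i ∧ F j ((i+1) % 3) - F j i ≤ 3*(n:ℤ) - 2)
    (hu : ∀ j, j < n → ∀ i, i < 3 → ∀ k, k < n → ∀ l, l < 3 →
      (F j ((i+1) % 3) - F j i = 3*(n:ℤ) - 2 ∨ F j ((i+1) % 3) - F j i = -(3*(n:ℤ) - 2)) →
      (F k ((l+1) % 3) - F k l = 3*(n:ℤ) - 2 ∨ F k ((l+1) % 3) - F k l = -(3*(n:ℤ) - 2)) →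
      j = k ∧ i = l) :
    Concl n := by
  refine ⟨fun p => F p.1.1 p.2.1, ⟨?_, ?_⟩, ?_, ?_⟩
  · -- BijOn
    have hcard : (Fintype.card (Fin n × Fin 3) : ℤ) = 3 * n := by
      simp [Fintype.card_prod]; ring
    rw [hcard]
    have hmapsTo : Set.MapsTo (fun p : Fin n × Fin 3 => F p.1.1 p.2.1) Set.univ
        (Set.Icc 1 (3 * (n:ℤ))) := by
      intro p _
      have := hmaps p.1.1 p.1.isLt p.2.1 p.2.isLt
      exact Set.mem_Icc.mpr ⟨this.1, by exact_mod_cast this.2⟩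
    have hinjOn : Set.InjOn (fun p : Fin n × Fin 3 => F p.1.1 p.2.1) Set.univ := by
      intro p _ q _ h
      obtain ⟨h1, h2⟩ := hinj p.1.1 p.1.isLt p.2.1 p.2.isLt q.1.1 q.1.isLt q.2.1 q.2.isLt h
      exact Prod.ext (Fin.ext h1) (Fin.ext h2)
    refine ⟨hmapsTo, hinjOn, ?_⟩
    -- SurjOn via cardinality
    have himg : (fun p : Fin n × Fin 3 => F p.1.1 p.2.1) '' Set.univ = Set.Icc 1 (3 * (n:ℤ)) := by
      apply Set.eq_of_subset_of_ncard_le (Set.image_subset_iff.mpr hmapsTo)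
      · have h1 : ((fun p : Fin n × Fin 3 => F p.1.1 p.2.1) '' Set.univ).ncard =
            (Set.univ : Set (Fin n × Fin 3)).ncard := Set.ncard_image_of_injOn hinjOn
        have h2 : (Set.univ : Set (Fin n × Fin 3)).ncard = 3 * n := by
          simp [Set.ncard_univ, mul_comm]
        have h3 : (Set.Icc 1 (3 * (n:ℤ))).ncard = 3 * n := by
          rw [← Finset.coe_Icc, Set.ncard_coe_finset, Int.card_Icc]
          omega
        omega
    rw [← himg]
    exact Set.surjOn_image _ _
  · -- InjOn of arc labels
    rintro x ⟨p, rfl⟩ y ⟨q, rfl⟩ hxy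
    simp only at hxy
    obtain ⟨h1, h2⟩ := hd p.1.1 p.1.isLt p.2.1 p.2.isLt q.1.1 q.1.isLt q.2.1 q.2.isLt hxy
    have hpq : p = q := Prod.ext (Fin.ext h1) (Fin.ext h2)
    subst hpq
    rfl
  · intro p
    exact abs_le.mpr (hb p.1.1 p.1.isLt p.2.1 p.2.isLt)
  · intro p q hp hq
    have hnn : (0:ℤ) ≤ 3*(n:ℤ) - 2 := by
      have : (2:ℤ) ≤ n := by exact_mod_cast hn
      omega
    obtain ⟨h1, h2⟩ := hu p.1.1 p.1.isLt p.2.1 p.2.isLt q.1.1 q.1.isLt q.2.1 q.2.isLt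
      ((abs_eq hnn).mp hp) ((abs_eq hnn).mp hq)
    exact Prod.ext (Fin.ext h1) (Fin.ext h2)

/-- even n = 2m, m % 3 ≠ 1 -/
def Fe1 (m j i : ℕ) : ℤ :=
  if i = 0 then (if j < m then 1 + 3*(j:ℤ) else 2 + 3*((j:ℤ) - m))
  else if i = 1 then (if j < m then 3 + 6*(j:ℤ) else 6*(m:ℤ) - 1 - 3*((j:ℤ) - m))
  else (if j < m then 6*(m:ℤ) - 2 - 3*(j:ℤ) else 6 + 6*((j:ℤ) - m))

set_option maxHeartbeats 1000000 in
lemma even1 (m : ℕ) (hm : 2 ≤ m) (h3 : m % 3 ≠ 1) : Concl (2*m) := by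
  apply glue (2*m) (by omega) (Fe1 m)
  · intro j hj i hi
    interval_cases i <;> simp only [Fe1] <;> norm_num <;> split_ifs <;> omega
  · intro j hj i hi k hk l hl h
    interval_cases i <;> interval_cases l <;>
      simp only [Fe1] at h <;> norm_num at h <;> split_ifs at h <;> omega
  · intro j hj i hi k hk l hl h
    interval_cases i <;> interval_cases l <;>
      simp only [Fe1] at h <;> norm_num at h <;> split_ifs at h <;> omega
  · intro j hj i hi
    interval_cases i <;> simp only [Fe1] <;> norm_num <;> split_ifs <;> omega
  · intro j hj i hi k hk l hl h1 h2
    interval_cases i <;> interval_cases l <;>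
      simp only [Fe1] at h1 h2 <;> norm_num at h1 h2 <;> split_ifs at h1 h2 <;> omega

def Fe2 (m j i : ℕ) : ℤ :=
  if i = 0 then (if j < m then 1 + 3*(j:ℤ) else 2 + 6*((j:ℤ) - m))
  else if i = 1 then (if j < m then 5 + 6*(j:ℤ) else 3 + 3*((j:ℤ) - m))
  else (if j < m then 6*(m:ℤ) - 2 - 3*(j:ℤ) else 6*(m:ℤ) - 3*((j:ℤ) - m))

set_option maxHeartbeats 1000000 in
lemma even2 (m : ℕ) (hm : 2 ≤ m) (h3 : m % 3 = 1) : Concl (2*m) := by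
  apply glue (2*m) (by omega) (Fe2 m)
  · intro j hj i hi
    interval_cases i <;> simp only [Fe2] <;> norm_num <;> split_ifs <;> omega
  · intro j hj i hi k hk l hl h
    interval_cases i <;> interval_cases l <;>
      simp only [Fe2] at h <;> norm_num at h <;> split_ifs at h <;> omega
  · intro j hj i hi k hk l hl h
    interval_cases i <;> interval_cases l <;>
      simp only [Fe2] at h <;> norm_num at h <;> split_ifs at h <;> omega
  · intro j hj i hi
    interval_cases i <;> simp only [Fe2] <;> norm_num <;> split_ifs <;> omega
  · intro j hj i hi k hk l hl h1 h2
    interval_cases i <;> interval_cases l <;>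
      simp only [Fe2] at h1 h2 <;> norm_num at h1 h2 <;> split_ifs at h1 h2 <;> omega

def FoA (k j i : ℕ) : ℤ :=
  if i = 0 then (if j < k then 3*(k:ℤ) - 2 - 3*(j:ℤ) else 6*(k:ℤ) + 2 - 3*((j:ℤ) - k))
  else if i = 1 then (if j < k then 6*((k:ℤ) - j) else 3 + 6*((j:ℤ) - k))
  else (if j < k + 1 then 3*(k:ℤ) + 1 + 3*(j:ℤ) else 3*((j:ℤ) - k) - 1)

set_option maxHeartbeats 1000000 in
lemma oddA (k : ℕ) (hk : 2 ≤ k) (h3 : k % 3 ≠ 0) : Concl (2*k+1) := by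
  apply glue (2*k+1) (by omega) (FoA k)
  · intro j hj i hi
    interval_cases i <;> simp only [FoA] <;> norm_num <;> split_ifs <;> omega
  · intro j hj i hi k hk l hl h
    interval_cases i <;> interval_cases l <;>
      simp only [FoA] at h <;> norm_num at h <;> split_ifs at h <;> omega
  · intro j hj i hi k hk l hl h
    interval_cases i <;> interval_cases l <;>
      simp only [FoA] at h <;> norm_num at h <;> split_ifs at h <;> omega
  · intro j hj i hi
    interval_cases i <;> simp only [FoA] <;> norm_num <;> split_ifs <;> omega
  · intro j hj i hi k hk l hl h1 h2
    interval_cases i <;> interval_cases l <;>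
      simp only [FoA] at h1 h2 <;> norm_num at h1 h2 <;> split_ifs at h1 h2 <;> omega

def FoB (k j i : ℕ) : ℤ :=
  if i = 0 then (if j < k then 2 + 3*(j:ℤ) else 3*(k:ℤ) + 1 + 3*((j:ℤ) - k))
  else if i = 1 then (if j < k then 6 + 6*(j:ℤ) else 6*(k:ℤ) + 3 - 6*((j:ℤ) - k))
  else (if j < k + 1 then 6*(k:ℤ) + 2 - 3*(j:ℤ) else 3*(k:ℤ) + 1 - 3*((j:ℤ) - k))

set_option maxHeartbeats 1000000 in
lemma oddB (k : ℕ) (hk : 3 ≤ k) (h3 : k % 3 = 0) : Concl (2*k+1) := by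
  apply glue (2*k+1) (by omega) (FoB k)
  · intro j hj i hi
    interval_cases i <;> simp only [FoB] <;> norm_num <;> split_ifs <;> omega
  · intro j hj i hi k hk l hl h
    interval_cases i <;> interval_cases l <;>
      simp only [FoB] at h <;> norm_num at h <;> split_ifs at h <;> omega
  · intro j hj i hi k hk l hl h
    interval_cases i <;> interval_cases l <;>
      simp only [FoB] at h <;> norm_num at h <;> split_ifs at h <;> omega
  · intro j hj i hi
    interval_cases i <;> simp only [FoB] <;> norm_num <;> split_ifs <;> omega
  · intro j hj i hi k hk l hl h1 h2
    interval_cases i <;> interval_cases l <;>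
      simp only [FoB] at h1 h2 <;> norm_num at h1 h2 <;> split_ifs at h1 h2 <;> omega

def Fs2 (j i : ℕ) : ℤ :=
  if j = 0 then (if i = 0 then 1 else if i = 1 then 2 else 4)
  else (if i = 0 then 3 else if i = 1 then 6 else 5)

lemma small2 : Concl 2 := by
  apply glue 2 (by omega) Fs2
  · intro j hj i hi
    interval_cases i <;> interval_cases j <;> simp [Fs2]
  · intro j hj i hi k hk l hl h
    interval_cases i <;> interval_cases l <;> interval_cases j <;> interval_cases k <;>
      simp_all [Fs2]
  · intro j hj i hi k hk l hl h
    interval_cases i <;> interval_cases l <;> interval_cases j <;> interval_cases k <;>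
      simp_all [Fs2]
  · intro j hj i hi
    interval_cases i <;> interval_cases j <;> simp [Fs2]
  · intro j hj i hi k hk l hl h1 h2
    interval_cases i <;> interval_cases l <;> interval_cases j <;> interval_cases k <;>
      simp_all [Fs2]

def Fs3 (j i : ℕ) : ℤ :=
  if j = 0 then (if i = 0 then 1 else if i = 1 then 4 else 6)
  else if j = 1 then (if i = 0 then 2 else if i = 1 then 7 else 8)
  else (if i = 0 then 3 else if i = 1 then 9 else 5)

lemma small3 : Concl 3 := by
  apply glue 3 (by omega) Fs3
  · intro j hj i hi
    interval_cases i <;> interval_cases j <;> simp [Fs3]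
  · intro j hj i hi k hk l hl h
    interval_cases i <;> interval_cases l <;> interval_cases j <;> interval_cases k <;>
      simp_all [Fs3]
  · intro j hj i hi k hk l hl h
    interval_cases i <;> interval_cases l <;> interval_cases j <;> interval_cases k <;>
      simp_all [Fs3]
  · intro j hj i hi
    interval_cases i <;> interval_cases j <;> simp [Fs3]
  · intro j hj i hi k hk l hl h1 h2
    interval_cases i <;> interval_cases l <;> interval_cases j <;> interval_cases k <;>
      simp_all [Fs3]

/-- For every `n ≥ 2`, `nC3` has a gdl in which at most one arc has magnitude `3n-2`
and every other arc has magnitude strictly smaller than `3n-2`.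
The `n` triangles live on `Fin n × Fin 3`, the `j`-th triangle being
`(j,0) → (j,1) → (j,2) → (j,0)`. -/
theorem stmt_17 (n : ℕ) (hn : 2 ≤ n) :
    ∃ f : Fin n × Fin 3 → ℤ,
      IsGdlOn (Set.range (fun p : Fin n × Fin 3 => (p, (p.1, cyc 3 (by omega) p.2)))) f ∧
      (∀ p : Fin n × Fin 3, |f (p.1, cyc 3 (by omega) p.2) - f p| ≤ 3 * (n : ℤ) - 2) ∧
      (∀ p q : Fin n × Fin 3,
        |f (p.1, cyc 3 (by omega) p.2) - f p| = 3 * (n : ℤ) - 2 →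
        |f (q.1, cyc 3 (by omega) q.2) - f q| = 3 * (n : ℤ) - 2 → p = q) := by
  show Concl n
  rcases Nat.even_or_odd n with ⟨m, hm⟩ | ⟨k, hk⟩
  · rcases eq_or_ne m 1 with h1 | h1
    · have : n = 2 := by omega
      rw [this]; exact small2
    · have hn2 : n = 2*m := by omega
      have hm2 : 2 ≤ m := by omega
      rw [hn2]
      rcases eq_or_ne (m % 3) 1 with h3 | h3
      · exact even2 m hm2 h3
      · exact even1 m hm2 h3
  · rcases eq_or_ne k 1 with h1 | h1
    · have : n = 3 := by omega
      rw [this]; exact small3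
    · have hk2 : 2 ≤ k := by omega
      rw [hk]
      rcases eq_or_ne (k % 3) 0 with h3 | h3
      · exact oddB k (by omega) h3
      · exact oddA k hk2 h3
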